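/- arXiv:2410.18655 — 8 statements merged into one kernel-verified Lean document; each statement's English description precedes it below -/
import Mathlib

section
/- Let X be a partial α-EFX allocation of chores among n agents with subadditive cost functions, with set P of unallocated chores. Suppose there exists β > 0 such that for every agent i there is a set R_i of at least n−1 agents satisfying: for every j ∈ R_i and every unallocated chore b ∈ P, C_i({b}) ≤ β·C_i(X_j). Then there exists a full max(α, β+1)-EFX allocation. -/
namespace ExtendEFXAux

variable {n m : ℕ}

lemma step_lemma
    (C : Fin n → Finset (Fin m) → ℝ)
    (hnonneg : ∀ i S, 0 ≤ C i S)
    (hmono : ∀ i (S T : Finset (Fin m)), S ⊆ T → C i S ≤ C i T)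
    (hsub : ∀ i (S T : Finset (Fin m)), Disjoint S T → C i (S ∪ T) ≤ C i S + C i T)
    (γ β : ℝ) (hγ1 : 1 ≤ γ) (hβγ : β + 1 ≤ γ) (hβ0 : 0 ≤ β) (hn : 0 < n)
    (X : Fin n → Finset (Fin m))
    (hdisj : ∀ i j : Fin n, i ≠ j → Disjoint (X i) (X j))
    (hEFX : ∀ i j : Fin n, ∀ c ∈ X i, C i (X i \ {c}) ≤ γ * C i (X j))
    (b : Fin m) (hb : ∀ k, b ∉ X k)
    (hcount : ∀ i : Fin n, ∃ R : Finset (Fin n), n - 1 ≤ R.card ∧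
       ∀ j ∈ R, C i {b} ≤ β * C i (X j)) :
    ∃ (Y : Fin n → Finset (Fin m)) (σ : Fin n → Fin n),
      Function.Bijective σ ∧ (∀ l, X (σ l) ⊆ Y l) ∧
      (∀ i j, i ≠ j → Disjoint (Y i) (Y j)) ∧
      (∀ c : Fin m, (∃ k, c ∈ Y k) ↔ (c = b ∨ ∃ k, c ∈ X k)) ∧
      (∀ i j, ∀ c ∈ Y i, C i (Y i \ {c}) ≤ γ * C i (Y j)) := by
  -- argmin function
  have hmin : ∀ i : Fin n, ∃ k : Fin n, ∀ r : Fin n, C i (X k) ≤ C i (X r) := by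
    intro i
    obtain ⟨k, _, hk⟩ := Finset.exists_min_image (Finset.univ : Finset (Fin n))
      (fun r => C i (X r)) ⟨⟨0, hn⟩, Finset.mem_univ _⟩
    exact ⟨k, fun r => hk r (Finset.mem_univ r)⟩
  choose f hf using hmin
  -- find a cycle of f
  obtain ⟨j, t, ht, hcyc⟩ : ∃ (j : Fin n) (t : ℕ), 0 < t ∧ f^[t] j = j := by
    obtain ⟨a, -, c, -, hac, heq⟩ :=
      Finset.exists_ne_map_eq_of_card_lt_of_maps_to
        (s := Finset.range (n+1)) (t := (Finset.univ : Finset (Fin n)))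
        (f := fun k => f^[k] ⟨0, hn⟩) (by simp) (fun _ _ => Finset.mem_univ _)
    rcases hac.lt_or_gt with h | h
    · refine ⟨f^[a] ⟨0, hn⟩, c - a, by omega, ?_⟩
      rw [← Function.iterate_add_apply, show c - a + a = c by omega]
      exact heq.symm
    · refine ⟨f^[c] ⟨0, hn⟩, a - c, by omega, ?_⟩
      rw [← Function.iterate_add_apply, show a - c + c = a by omega]
      exact heq
  set S : Finset (Fin n) := (Finset.range t).image (fun k => f^[k] j) with hS
  have hjS : j ∈ S := Finset.mem_image.mpr ⟨0, by simpa using ht, rfl⟩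
  have hmapsS : ∀ x ∈ S, f x ∈ S := by
    intro x hx
    obtain ⟨k, hk, rfl⟩ := Finset.mem_image.mp hx
    rw [Finset.mem_range] at hk
    rw [← Function.iterate_succ_apply' f k j]
    by_cases hkt : k + 1 = t
    · rw [show k.succ = t from hkt, hcyc]; exact hjS
    · exact Finset.mem_image.mpr ⟨k + 1, Finset.mem_range.mpr (by omega), rfl⟩
  have hret : ∀ x ∈ S, f^[t-1] (f x) = x := by
    intro x hx
    obtain ⟨k, hk, rfl⟩ := Finset.mem_image.mp hx
    rw [Finset.mem_range] at hk
    rw [← Function.iterate_succ_apply' f k j, ← Function.iterate_add_apply,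
      show t - 1 + (k + 1) = k + t by omega, Function.iterate_add_apply, hcyc]
  set σ : Fin n → Fin n := fun x => if x ∈ S then f x else x with hσ
  have hσS : ∀ x ∈ S, σ x = f x := fun x hx => if_pos hx
  have hσnS : ∀ x ∉ S, σ x = x := fun x hx => if_neg hx
  have hσinj : Function.Injective σ := by
    intro x y hxy
    by_cases hx : x ∈ S <;> by_cases hy : y ∈ S
    · rw [hσS x hx, hσS y hy] at hxy
      rw [← hret x hx, ← hret y hy, hxy]
    · exfalso
      rw [hσS x hx, hσnS y hy] at hxy
      exact hy (hxy ▸ hmapsS x hx)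
    · exfalso
      rw [hσnS x hx, hσS y hy] at hxy
      exact hx (hxy ▸ hmapsS y hy)
    · rwa [hσnS x hx, hσnS y hy] at hxy
  have hσbij : Function.Bijective σ := Finite.injective_iff_bijective.mp hσinj
  have hσj : σ j = f j := hσS j hjS
  -- key smallness property
  have hkey : ∀ r : Fin n, r ≠ f j → C j {b} ≤ β * C j (X r) := by
    intro r hr
    obtain ⟨R, hRcard, hRs⟩ := hcount j
    by_cases hfj : f j ∈ R
    · calc C j {b} ≤ β * C j (X (f j)) := hRs _ hfj
        _ ≤ β * C j (X r) := mul_le_mul_of_nonneg_left (hf j r) hβ0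
    · apply hRs
      by_contra hrR
      have h2 : ({r, f j} : Finset (Fin n)) ⊆ Rᶜ := by
        intro x hx
        rw [Finset.mem_insert] at hx
        rcases hx with rfl | hx
        · exact Finset.mem_compl.mpr hrR
        · rw [Finset.mem_singleton] at hx; subst hx; exact Finset.mem_compl.mpr hfj
      have hc2 : 2 ≤ Rᶜ.card := by
        have hcards := Finset.card_le_card h2
        rwa [Finset.card_insert_of_notMem (by simp [hr]), Finset.card_singleton] at hcards
      have hcompl : Rᶜ.card = Fintype.card (Fin n) - R.card := Finset.card_compl R
      have hle := Finset.card_le_univ R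
      rw [Fintype.card_fin] at hle
      rw [Fintype.card_fin] at hcompl
      omega
  -- new allocation
  set Y : Fin n → Finset (Fin m) :=
    fun l => if l = j then X (f j) ∪ {b} else X (σ l) with hY
  have hYj : Y j = X (f j) ∪ {b} := if_pos rfl
  have hYl : ∀ l, l ≠ j → Y l = X (σ l) := fun l hl => if_neg hl
  have hYsup : ∀ l, X (σ l) ⊆ Y l := by
    intro l
    by_cases hl : l = j
    · subst hl; rw [hYj, hσj]; exact Finset.subset_union_left
    · rw [hYl l hl]
  have hbY : ∀ k x, x ∈ Y k → x ≠ b → x ∈ X (σ k) := by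
    intro k x hx hxb
    by_cases hk : k = j
    · subst hk; rw [hYj] at hx
      rcases Finset.mem_union.mp hx with h | h
      · rwa [hσj]
      · exact absurd (Finset.mem_singleton.mp h) hxb
    · rwa [hYl k hk] at hx
  have hbmem : b ∈ Y j := by
    rw [hYj]; exact Finset.mem_union_right _ (Finset.mem_singleton_self b)
  refine ⟨Y, σ, hσbij, hYsup, ?_, ?_, ?_⟩
  · -- disjointness
    intro i l hil
    rw [Finset.disjoint_left]
    intro x hxi hxl
    by_cases hxb : x = b
    · subst hxb
      have hi : i = j := by
        by_contra h
        rw [hYl i h] at hxi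
        exact hb _ hxi
      have hl : l = j := by
        by_contra h
        rw [hYl l h] at hxl
        exact hb _ hxl
      exact hil (hi.trans hl.symm)
    · exact Finset.disjoint_left.mp (hdisj (σ i) (σ l) (fun h => hil (hσinj h)))
        (hbY i x hxi hxb) (hbY l x hxl hxb)
  · -- coverage
    intro c
    constructor
    · rintro ⟨k, hk⟩
      by_cases hcb : c = b
      · exact Or.inl hcb
      · exact Or.inr ⟨_, hbY k c hk hcb⟩
    · rintro (rfl | ⟨k, hk⟩)
      · exact ⟨j, hbmem⟩
      · obtain ⟨l, hl⟩ := hσbij.2 k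
        exact ⟨l, hYsup l (by rw [hl]; exact hk)⟩
  · -- EFX
    intro i l c hc
    by_cases hil : i = l
    · subst hil
      calc C i (Y i \ {c}) ≤ C i (Y i) := hmono _ _ _ Finset.sdiff_subset
        _ ≤ γ * C i (Y i) := le_mul_of_one_le_left (hnonneg _ _) hγ1
    · by_cases hij : i = j
      · subst hij
        have hσlne : σ l ≠ f i := by
          intro h
          exact hil (hσinj (h.trans hσj.symm)).symm
        rw [hYj] at hc ⊢
        rw [hYl l (fun h => hil h.symm)]
        by_cases hcb : c = b
        · subst hcb
          have hXb : (X (f i) ∪ {c}) \ {c} = X (f i) := by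
            ext x
            simp only [Finset.mem_sdiff, Finset.mem_union, Finset.mem_singleton]
            constructor
            · rintro ⟨h | h, hne⟩
              · exact h
              · exact absurd h hne
            · intro hx
              exact ⟨Or.inl hx, fun h => hb _ (h ▸ hx)⟩
          rw [hXb]
          calc C i (X (f i)) ≤ C i (X (σ l)) := hf i (σ l)
            _ ≤ γ * C i (X (σ l)) := le_mul_of_one_le_left (hnonneg _ _) hγ1
        · have hbc : b ≠ c := fun h => hcb h.symm
          have hsplit : (X (f i) ∪ {b}) \ {c} = (X (f i) \ {c}) ∪ {b} := by
            ext x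
            simp only [Finset.mem_sdiff, Finset.mem_union, Finset.mem_singleton]
            constructor
            · rintro ⟨h | h, hne⟩
              · exact Or.inl ⟨h, hne⟩
              · exact Or.inr h
            · rintro (⟨h, hne⟩ | rfl)
              · exact ⟨Or.inl h, hne⟩
              · exact ⟨Or.inr rfl, hbc⟩
          rw [hsplit]
          have hdisj2 : Disjoint (X (f i) \ {c}) ({b} : Finset (Fin m)) := by
            rw [Finset.disjoint_singleton_right, Finset.mem_sdiff]
            exact fun h => hb _ h.1
          calc C i ((X (f i) \ {c}) ∪ {b}) ≤ C i (X (f i) \ {c}) + C i {b} :=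
                hsub _ _ _ hdisj2
            _ ≤ C i (X (σ l)) + β * C i (X (σ l)) :=
                add_le_add (le_trans (hmono _ _ _ Finset.sdiff_subset) (hf i (σ l)))
                  (hkey (σ l) hσlne)
            _ = (β + 1) * C i (X (σ l)) := by ring
            _ ≤ γ * C i (X (σ l)) := mul_le_mul_of_nonneg_right hβγ (hnonneg _ _)
      · have hYi : Y i = X (σ i) := hYl i hij
        by_cases hiS : i ∈ S
        · have hσi : σ i = f i := hσS i hiS
          calc C i (Y i \ {c}) ≤ C i (Y i) := hmono _ _ _ Finset.sdiff_subset
            _ = C i (X (f i)) := by rw [hYi, hσi]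
            _ ≤ C i (X (σ l)) := hf i (σ l)
            _ ≤ C i (Y l) := hmono _ _ _ (hYsup l)
            _ ≤ γ * C i (Y l) := le_mul_of_one_le_left (hnonneg _ _) hγ1
        · have hσi : σ i = i := hσnS i hiS
          rw [hYi, hσi] at hc ⊢
          calc C i (X i \ {c}) ≤ γ * C i (X (σ l)) := hEFX i (σ l) c hc
            _ ≤ γ * C i (Y l) :=
                mul_le_mul_of_nonneg_left (hmono _ _ _ (hYsup l))
                  (le_trans zero_le_one hγ1)

lemma extend_aux
    (C : Fin n → Finset (Fin m) → ℝ)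
    (hnonneg : ∀ i S, 0 ≤ C i S)
    (hmono : ∀ i (S T : Finset (Fin m)), S ⊆ T → C i S ≤ C i T)
    (hsub : ∀ i (S T : Finset (Fin m)), Disjoint S T → C i (S ∪ T) ≤ C i S + C i T)
    (γ β : ℝ) (hγ1 : 1 ≤ γ) (hβγ : β + 1 ≤ γ) (hβ0 : 0 ≤ β) (hn : 0 < n) :
    ∀ (p : ℕ) (X : Fin n → Finset (Fin m)),
    (Finset.univ.filter (fun b => ∀ k, b ∉ X k)).card ≤ p →
    (∀ i j, i ≠ j → Disjoint (X i) (X j)) →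
    (∀ i j, ∀ c ∈ X i, C i (X i \ {c}) ≤ γ * C i (X j)) →
    (∀ (i : Fin n) (b : Fin m), (∀ k, b ∉ X k) →
      ∃ R : Finset (Fin n), n - 1 ≤ R.card ∧ ∀ j ∈ R, C i {b} ≤ β * C i (X j)) →
    ∃ X' : Fin n → Finset (Fin m),
      (∀ i j, i ≠ j → Disjoint (X' i) (X' j)) ∧
      (∀ b, ∃ i, b ∈ X' i) ∧
      (∀ i j, ∀ c ∈ X' i, C i (X' i \ {c}) ≤ γ * C i (X' j)) := by
  intro p
  induction p with
  | zero =>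
    intro X hcard hdisj hEFX _
    refine ⟨X, hdisj, ?_, hEFX⟩
    intro b
    by_contra hcon
    push_neg at hcon
    have hmem : b ∈ Finset.univ.filter (fun b => ∀ k, b ∉ X k) := by
      simp only [Finset.mem_filter, Finset.mem_univ, true_and]
      exact hcon
    have := Finset.card_pos.mpr ⟨b, hmem⟩
    omega
  | succ p ih =>
    intro X hcard hdisj hEFX hinv
    by_cases hempty : (Finset.univ.filter (fun b => ∀ k, b ∉ X k)) = ∅
    · refine ⟨X, hdisj, ?_, hEFX⟩
      intro b
      by_contra hcon
      push_neg at hcon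
      have hmem : b ∈ Finset.univ.filter (fun b => ∀ k, b ∉ X k) := by
        simp only [Finset.mem_filter, Finset.mem_univ, true_and]
        exact hcon
      rw [hempty] at hmem
      exact absurd hmem (Finset.notMem_empty b)
    · obtain ⟨b, hbmem⟩ := Finset.nonempty_iff_ne_empty.mpr hempty
      have hbun : ∀ k, b ∉ X k := (Finset.mem_filter.mp hbmem).2
      obtain ⟨Y, σ, hσbij, hYsup, hYdisj, hYcov, hYEFX⟩ :=
        step_lemma C hnonneg hmono hsub γ β hγ1 hβγ hβ0 hn X hdisj hEFX b hbun
          (fun i => hinv i b hbun)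
      have hXofY : ∀ x : Fin m, (∀ k, x ∉ Y k) → ∀ k, x ∉ X k := by
        intro x hx k hk
        obtain ⟨l, hl⟩ := hσbij.2 k
        exact hx l (hYsup l (by rw [hl]; exact hk))
      apply ih Y ?_ hYdisj hYEFX ?_
      · have hsub2 : Finset.univ.filter (fun b' => ∀ k, b' ∉ Y k) ⊆
            (Finset.univ.filter (fun b' => ∀ k, b' ∉ X k)).erase b := by
          intro x hx
          have hxun : ∀ k, x ∉ Y k := (Finset.mem_filter.mp hx).2
          have hxb : x ≠ b := by
            intro h
            subst h
            obtain ⟨k, hk⟩ := (hYcov x).mpr (Or.inl rfl)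
            exact hxun k hk
          refine Finset.mem_erase.mpr ⟨hxb, ?_⟩
          simp only [Finset.mem_filter, Finset.mem_univ, true_and]
          exact hXofY x hxun
        have h1 := Finset.card_le_card hsub2
        have h2 := Finset.card_erase_of_mem hbmem
        have h3 := Finset.card_pos.mpr ⟨b, hbmem⟩
        omega
      · intro i b' hb'
        obtain ⟨R, hRcard, hRs⟩ := hinv i b' (hXofY b' hb')
        set e := Equiv.ofBijective σ hσbij with he
        refine ⟨R.image e.symm, ?_, ?_⟩
        · rw [Finset.card_image_of_injective _ (Equiv.injective _)]
          exact hRcard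
        · intro l hl
          obtain ⟨r, hr, rfl⟩ := Finset.mem_image.mp hl
          have hXr : X r ⊆ Y (e.symm r) := by
            have happ : σ (e.symm r) = r := e.apply_symm_apply r
            have h5 := hYsup (e.symm r)
            rwa [happ] at h5
          exact le_trans (hRs r hr)
            (mul_le_mul_of_nonneg_left (hmono _ _ _ hXr) hβ0)

end ExtendEFXAux

/-- extending a partial α-EFX allocation to a full max(α, β+1)-EFX allocation. -/
theorem extend_partial_EFX (n m : ℕ) (hn : 0 < n)
    (C : Fin n → Finset (Fin m) → ℝ)
    (hnonneg : ∀ i S, 0 ≤ C i S)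
    (hmono : ∀ i (S T : Finset (Fin m)), S ⊆ T → C i S ≤ C i T)
    (hsub : ∀ i (S T : Finset (Fin m)), Disjoint S T → C i (S ∪ T) ≤ C i S + C i T)
    (α β : ℝ) (hα : 1 ≤ α) (hβ : 0 < β)
    (X : Fin n → Finset (Fin m))
    (hdisj : ∀ i j : Fin n, i ≠ j → Disjoint (X i) (X j))
    (hEFX : ∀ i j : Fin n, ∀ c ∈ X i, C i (X i \ {c}) ≤ α * C i (X j))
    (hR : ∀ i : Fin n, ∃ R : Finset (Fin n), n - 1 ≤ R.card ∧
      ∀ j ∈ R, ∀ b : Fin m, (∀ k : Fin n, b ∉ X k) → C i {b} ≤ β * C i (X j)) :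
    ∃ X' : Fin n → Finset (Fin m),
      (∀ i j : Fin n, i ≠ j → Disjoint (X' i) (X' j)) ∧
      (∀ b : Fin m, ∃ i : Fin n, b ∈ X' i) ∧
      (∀ i j : Fin n, ∀ c ∈ X' i, C i (X' i \ {c}) ≤ max α (β + 1) * C i (X' j)) := by
  have hγ1 : 1 ≤ max α (β + 1) := le_trans hα (le_max_left _ _)
  have hβγ : β + 1 ≤ max α (β + 1) := le_max_right _ _
  have hβ0 : 0 ≤ β := le_of_lt hβ
  have hEFX' : ∀ i j : Fin n, ∀ c ∈ X i, C i (X i \ {c}) ≤ max α (β + 1) * C i (X j) :=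
    fun i j c hc => le_trans (hEFX i j c hc)
      (mul_le_mul_of_nonneg_right (le_max_left _ _) (hnonneg _ _))
  have hinv : ∀ (i : Fin n) (b : Fin m), (∀ k, b ∉ X k) →
      ∃ R : Finset (Fin n), n - 1 ≤ R.card ∧ ∀ j ∈ R, C i {b} ≤ β * C i (X j) := by
    intro i b hb
    obtain ⟨R, h1, h2⟩ := hR i
    exact ⟨R, h1, fun j hj => h2 j hj b hb⟩
  exact ExtendEFXAux.extend_aux C hnonneg hmono hsub (max α (β + 1)) β hγ1 hβγ hβ0 hn
    (Finset.univ.filter (fun b => ∀ k, b ∉ X k)).card X le_rfl hdisj hEFX' hinv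
end

section
/- Let C be a subadditive monotone cost function, b a chore, D a nonempty finite set of chores not containing b, and c* a chore such that C({b} ∪ D) ≥ C({c*}), C({b} ∪ (D \ {d})) ≤ C({c*}) for every d ∈ D, and C({d}) < C({c*}) for every d ∈ D. Then C(D) ≤ 2·C({c*}). -/
/-- under the stated conditions, C(D) ≤ 2·C({c*}). -/
theorem cost_D_le_two (m : ℕ)
    (C : Finset (Fin m) → ℝ)
    (hnonneg : ∀ S, 0 ≤ C S)
    (hmono : ∀ S T : Finset (Fin m), S ⊆ T → C S ≤ C T)
    (hsub : ∀ S T : Finset (Fin m), Disjoint S T → C (S ∪ T) ≤ C S + C T)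
    (b cstar : Fin m) (D : Finset (Fin m))
    (hbD : b ∉ D) (hDne : D.Nonempty)
    (hbig : C {cstar} ≤ C (insert b D))
    (hremove : ∀ d ∈ D, C (insert b (D \ {d})) ≤ C {cstar})
    (hsingle : ∀ d ∈ D, C {d} < C {cstar}) :
    C D ≤ 2 * C {cstar} := by
  obtain ⟨d, hd⟩ := hDne
  have hDeq : D = (D \ {d}) ∪ {d} :=
    (Finset.sdiff_union_of_subset (by simpa using hd)).symm
  have hdisj : Disjoint (D \ {d}) ({d} : Finset (Fin m)) :=
    Finset.sdiff_disjoint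
  calc C D = C ((D \ {d}) ∪ {d}) := by rw [← hDeq]
    _ ≤ C (D \ {d}) + C {d} := hsub _ _ hdisj
    _ ≤ C (insert b (D \ {d})) + C {d} := by
        gcongr; exact hmono _ _ (Finset.subset_insert _ _)
    _ ≤ C {cstar} + C {cstar} := by
        gcongr
        · exact hremove d hd
        · exact (hsingle d hd).le
    _ = 2 * C {cstar} := by ring
end

section
/- For three agents with additive cost functions given by the table (agent costs for chores c1..c6 are: agent 1: 10, 6, 4, 0.5, 0.5, 3; agent 2: 6, 10, 3, 2, 2, 1.5; agent 3: 1, 3, 4, m1/2, m1/2, m2 with m1/2 > m2 > 6), the allocation X_1 = {c_2}, X_2 = {c_3, c_4, c_5}, X_3 = {c_1, c_6} is not 2-EFX: indeed max_{c ∈ X_3} C_3(X_3 \ {c}) = m_2 > 2·C_3(X_1) = 6. -/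
/-- the counterexample allocation X₁ = {c₂}, X₂ = {c₃,c₄,c₅}, X₃ = {c₁,c₆}
is not 2-EFX: max_{c ∈ X₃} C₃(X₃ \ {c}) = m₂ > 2·C₃(X₁) = 6. -/
theorem counterexample_not_two_EFX (m1 m2 : ℝ) (h1 : m1 / 2 > m2) (h2 : m2 > 6) :
    let cost : Fin 3 → Fin 6 → ℝ :=
      ![![10, 6, 4, 0.5, 0.5, 3], ![6, 10, 3, 2, 2, 1.5], ![1, 3, 4, m1 / 2, m1 / 2, m2]]
    let C : Fin 3 → Finset (Fin 6) → ℝ := fun i S => ∑ c ∈ S, cost i c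
    let X : Fin 3 → Finset (Fin 6) := ![{1}, {2, 3, 4}, {0, 5}]
    (∃ c ∈ X 2, C 2 (X 2 \ {c}) = m2 ∧ 2 * C 2 (X 0) = 6 ∧ C 2 (X 2 \ {c}) > 2 * C 2 (X 0)) ∧
    ¬ (∀ i j : Fin 3, ∀ c ∈ X i, C i (X i \ {c}) ≤ 2 * C i (X j)) := by
  intro cost C X
  have e5 : (![1, 3, 4, m1 / 2, m1 / 2, m2] : Fin 6 → ℝ) 5 = m2 := rfl
  have key : C 2 (X 2 \ {(0 : Fin 6)}) = m2 := by
    simp [C, X, cost, e5]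
  have hC0 : C 2 (X 0) = 3 := by simp [C, X, cost, Matrix.cons_val_succ, Matrix.cons_val_zero, Fin.sum_univ_succ, show ((5:Fin 6))= ⟨5,by norm_num⟩ from rfl]
  refine ⟨⟨0, by simp [X], key, by rw [hC0]; norm_num, by rw [key, hC0]; linarith⟩, ?_⟩
  intro h
  have := h 2 0 0 (by simp [X])
  rw [key, hC0] at this
  linarith
end

section
/- The output of the round-robin algorithm (each agent in a fixed order repeatedly picks its least costly remaining chore) after ℓ ≥ 3 rounds is a (1 + (α−1)/(ℓ−1))-EFX allocation when all agents have additive α-ratio-bounded cost functions. -/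
set_option maxHeartbeats 1000000


/-- `X` is the output of the round-robin algorithm: there is an order of picks
(the chore `p s` is picked at global step `s` by agent `s mod n`) so that each pick
is the least costly chore, for the picking agent, among all chores picked later. -/
def IsRoundRobin (n m : ℕ) (hn : 0 < n) (cost : Fin n → Fin m → ℝ)
    (X : Fin n → Finset (Fin m)) : Prop :=
  ∃ p : Equiv.Perm (Fin m),
    (∀ (i : Fin n) (c : Fin m), c ∈ X i ↔ ((p.symm c : ℕ) % n) = (i : ℕ)) ∧
    (∀ s t : Fin m, (s : ℕ) < (t : ℕ) →
      cost ⟨(s : ℕ) % n, Nat.mod_lt _ hn⟩ (p s) ≤ cost ⟨(s : ℕ) % n, Nat.mod_lt _ hn⟩ (p t))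

/-- the round-robin output after ℓ = ⌈m/n⌉ ≥ 3 rounds is
(1 + (α−1)/(ℓ−1))-EFX for additive α-ratio-bounded cost functions. -/
theorem roundRobin_apx_EFX (n m : ℕ) (hn : 0 < n)
    (cost : Fin n → Fin m → ℝ) (hnn : ∀ i c, 0 ≤ cost i c)
    (α : ℝ) (hα : 1 ≤ α)
    (hratio : ∀ i (c c' : Fin m), cost i c ≤ α * cost i c')
    (hl : 3 ≤ (m + n - 1) / n)
    (X : Fin n → Finset (Fin m))
    (hX : IsRoundRobin n m hn cost X) :
    ∀ i j : Fin n, ∀ c ∈ X i,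
      ∑ x ∈ X i \ {c}, cost i x ≤
        (1 + (α - 1) / ((((m + n - 1) / n : ℕ) : ℝ) - 1)) * ∑ x ∈ X j, cost i x := by
  obtain ⟨p, hmem, hmono⟩ := hX
  intro i j c hc
  have hαpos : (0:ℝ) < α := lt_of_lt_of_le one_pos hα
  set ℓ : ℕ := (m + n - 1) / n with hℓdef
  have h3n : 3 * n ≤ m + n - 1 := (Nat.le_div_iff_mul_le hn).mp hl
  have hnm : n < m := by omega
  have hℓn : ℓ * n ≤ m + n - 1 := Nat.div_mul_le_self _ _
  set L : ℕ → ℕ := fun t => (m + n - 1 - t) / n with hLdef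
  have hkey : ∀ t k : ℕ, t < n → ((t + k * n < m) ↔ k < L t) := by
    intro t k ht
    simp only [hLdef]
    have h2 : k < (m + n - 1 - t) / n ↔ (k + 1) * n ≤ m + n - 1 - t := by
      rw [Nat.lt_iff_add_one_le, Nat.le_div_iff_mul_le hn]
    rw [h2, add_mul, one_mul]
    generalize k * n = K
    omega
  have hLle : ∀ t : ℕ, L t ≤ ℓ := fun t => Nat.div_le_div_right (Nat.sub_le _ _)
  have hLge : ∀ t : ℕ, t < n → ℓ - 1 ≤ L t := by
    intro t ht
    simp only [hLdef]
    rw [Nat.le_div_iff_mul_le hn, Nat.sub_mul, one_mul]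
    generalize hZ : ℓ * n = Z at hℓn ⊢
    omega
  have hLmono : ∀ t t' : ℕ, t ≤ t' → L t' ≤ L t := fun t t' h =>
    Nat.div_le_div_right (by omega)
  set F : ℕ → (Fin m → ℝ) → ℕ → ℝ :=
    fun t f k => if h : t + k * n < m then f (p ⟨t + k * n, h⟩) else 0 with hFdef
  have hFval : ∀ (t : ℕ) (f : Fin m → ℝ) (k : ℕ) (h : t + k * n < m),
      F t f k = f (p ⟨t + k * n, h⟩) := by
    intro t f k h
    simp only [hFdef]
    rw [dif_pos h]
  have hFnn : ∀ (t k : ℕ), 0 ≤ F t (cost i) k := by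
    intro t k
    simp only [hFdef]
    split
    · exact hnn _ _
    · exact le_rfl
  -- monotonicity of picks
  have hstep : ∀ (k : ℕ) (hk : (i : ℕ) + k * n < m) (x : Fin m),
      (i : ℕ) + k * n ≤ (p.symm x : ℕ) → cost i (p ⟨(i : ℕ) + k * n, hk⟩) ≤ cost i x := by
    intro k hk x hle
    rcases eq_or_lt_of_le hle with he | hlt
    · have hfe : (⟨(i : ℕ) + k * n, hk⟩ : Fin m) = p.symm x := Fin.ext he
      rw [hfe, Equiv.apply_symm_apply]
    · have h2 := hmono ⟨(i : ℕ) + k * n, hk⟩ (p.symm x) hlt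
      have hidx : (⟨((i : ℕ) + k * n) % n, Nat.mod_lt _ hn⟩ : Fin n) = i := by
        apply Fin.ext
        simp [Nat.add_mul_mod_self_right, Nat.mod_eq_of_lt i.isLt]
      rw [hidx, Equiv.apply_symm_apply] at h2
      exact h2
  have hcomp : ∀ (t' : Fin n) (k k' : ℕ) (hk : (i : ℕ) + k * n < m)
      (hk' : (t' : ℕ) + k' * n < m), (i : ℕ) + k * n ≤ (t' : ℕ) + k' * n →
      F i (cost i) k ≤ F t' (cost i) k' := by
    intro t' k k' hk hk' hle
    rw [hFval _ _ _ hk, hFval _ _ _ hk']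
    apply hstep k hk
    rw [Equiv.symm_apply_apply]
    exact hle
  have hFratio : ∀ (t' : Fin n) (k k' : ℕ), (i : ℕ) + k * n < m → (t' : ℕ) + k' * n < m →
      F i (cost i) k ≤ α * F t' (cost i) k' := by
    intro t' k k' hk hk'
    rw [hFval _ _ _ hk, hFval _ _ _ hk']
    exact hratio i _ _
  -- sum reindexing
  have hsum : ∀ (t : Fin n) (f : Fin m → ℝ),
      ∑ x ∈ X t, f x = ∑ k ∈ Finset.range (L t), F t f k := by
    intro t f
    have hXf : X t = Finset.univ.filter (fun x => ((p.symm x : Fin m) : ℕ) % n = (t : ℕ)) := by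
      ext x; simp [hmem]
    rw [hXf]
    refine Finset.sum_bij' (fun x _ => ((p.symm x : Fin m) : ℕ) / n)
      (fun k hk => p ⟨(t : ℕ) + k * n,
        (hkey t k t.isLt).mpr (Finset.mem_range.mp hk)⟩) ?hi ?hj ?left ?right ?hval
    case hi =>
      intro x hx
      simp only [Finset.mem_filter] at hx
      have hmod := hx.2
      have h1 : (t : ℕ) + ((p.symm x : Fin m) : ℕ) / n * n = ((p.symm x : Fin m) : ℕ) := by
        have h2 := Nat.mod_add_div ((p.symm x : Fin m) : ℕ) n
        rw [hmod] at h2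
        rw [mul_comm]
        exact h2
      rw [Finset.mem_range, ← hkey _ _ t.isLt, h1]
      exact (p.symm x).isLt
    case hj =>
      intro k hk
      simp only [Finset.mem_filter]
      refine ⟨Finset.mem_univ _, ?_⟩
      rw [Equiv.symm_apply_apply]
      simp [Nat.add_mul_mod_self_right, Nat.mod_eq_of_lt t.isLt]
    case left =>
      intro x hx
      simp only [Finset.mem_filter] at hx
      have hmod := hx.2
      have h1 : (t : ℕ) + ((p.symm x : Fin m) : ℕ) / n * n = ((p.symm x : Fin m) : ℕ) := by
        have h2 := Nat.mod_add_div ((p.symm x : Fin m) : ℕ) n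
        rw [hmod] at h2
        rw [mul_comm]
        exact h2
      rw [Equiv.apply_eq_iff_eq_symm_apply]
      exact Fin.ext h1
    case right =>
      intro k hk
      simp only [Equiv.symm_apply_apply]
      simp [Nat.add_mul_div_right _ _ hn, Nat.div_eq_of_lt t.isLt]
    case hval =>
      intro x hx
      simp only [Finset.mem_filter] at hx
      have hmod := hx.2
      have h1 : (t : ℕ) + ((p.symm x : Fin m) : ℕ) / n * n = ((p.symm x : Fin m) : ℕ) := by
        have h2 := Nat.mod_add_div ((p.symm x : Fin m) : ℕ) n
        rw [hmod] at h2
        rw [mul_comm]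
        exact h2
      have hlt : (t : ℕ) + (((p.symm x : Fin m) : ℕ) / n) * n < m := by
        rw [h1]; exact (p.symm x).isLt
      rw [hFval _ _ _ hlt]
      congr 1
      have h3 : (⟨(t : ℕ) + ((p.symm x : Fin m) : ℕ) / n * n, hlt⟩ : Fin m) = p.symm x :=
        Fin.ext h1
      rw [h3, Equiv.apply_symm_apply]
  -- basic quantities
  have hLi2 : 2 ≤ L i := le_trans (by omega) (hLge i i.isLt)
  set K : ℕ := L i - 1 with hKdef
  have hKsucc : L i = K + 1 := by omega
  have hKge : ℓ - 2 ≤ K := by have := hLge i i.isLt; omega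
  have hKlt : K < L i := by omega
  have hcge : F i (cost i) 0 ≤ cost i c := by
    have h0 : (i : ℕ) + 0 * n < m := by simpa using lt_trans i.isLt hnm
    rw [hFval _ _ _ h0]
    apply hstep 0 h0 c
    have h := (hmem i c).mp hc
    have := Nat.mod_le ((p.symm c : Fin m) : ℕ) n
    omega
  have herase : ∑ x ∈ X i \ {c}, cost i x = ∑ x ∈ X i, cost i x - cost i c := by
    rw [← Finset.erase_eq, Finset.sum_erase_eq_sub hc]
  have hLHS : ∑ x ∈ X i \ {c}, cost i x ≤ ∑ k ∈ Finset.range K, F i (cost i) (k + 1) := by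
    rw [herase, hsum i (cost i), hKsucc, Finset.sum_range_succ']
    linarith [hcge]
  -- real constants
  have hℓ3R : (3 : ℝ) ≤ (ℓ : ℝ) := by exact_mod_cast hl
  have hℓ1ne : (ℓ : ℝ) - 1 ≠ 0 := by linarith
  have hαne : α ≠ 0 := ne_of_gt hαpos
  set β : ℝ := 1 + (α - 1) / ((ℓ : ℝ) - 1) with hβdef
  have hβ1 : 1 ≤ β := by
    have h0 : 0 ≤ (α - 1) / ((ℓ : ℝ) - 1) := div_nonneg (by linarith) (by linarith)
    rw [hβdef]
    linarith
  set a : ℝ := F i (cost i) K with hadef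
  have hann : 0 ≤ a := hFnn i K
  set S : ℝ := ∑ k ∈ Finset.range K, F i (cost i) k with hSdef
  have hid : ∑ k ∈ Finset.range K, F i (cost i) (k + 1) = S + (a - F i (cost i) 0) := by
    have h := Finset.sum_range_sub (fun k => F i (cost i) k) K
    rw [Finset.sum_sub_distrib] at h
    simp only [hSdef, hadef]
    linarith
  have hSge : (K : ℝ) * (a / α) ≤ S := by
    have hb : ∀ k ∈ Finset.range K, a / α ≤ F i (cost i) k := by
      intro k hk
      rw [Finset.mem_range] at hk
      have hki : (i : ℕ) + k * n < m := (hkey i k i.isLt).mpr (by omega)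
      have hKi : (i : ℕ) + K * n < m := (hkey i K i.isLt).mpr hKlt
      rw [div_le_iff₀ hαpos, mul_comm]
      exact hFratio i K k hKi hki
    have := Finset.card_nsmul_le_sum (Finset.range K) (fun k => F i (cost i) k) (a / α) hb
    simpa [nsmul_eq_mul] using this
  have hA0nn : 0 ≤ F i (cost i) 0 := hFnn i 0
  clear_value β a S
  rw [hsum j (cost i)]
  refine le_trans hLHS ?_
  rw [hid]
  by_cases hcase : L i ≤ L j
  · -- case A
    have h0j : (j : ℕ) + 0 * n < m := (hkey j 0 j.isLt).mpr (by have := hLge j j.isLt; omega)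
    set g0 : ℝ := F j (cost i) 0 with hg0def
    have hTge : S + g0 ≤ ∑ k ∈ Finset.range (L j), F j (cost i) k := by
      have hsub : ∑ k ∈ Finset.range (L i), F j (cost i) k ≤
          ∑ k ∈ Finset.range (L j), F j (cost i) k :=
        Finset.sum_le_sum_of_subset_of_nonneg (Finset.range_subset_range.mpr hcase)
          (fun k _ _ => hFnn j k)
      have hsplit : ∑ k ∈ Finset.range (L i), F j (cost i) k =
          ∑ k ∈ Finset.range K, F j (cost i) (k + 1) + g0 := by
        rw [hKsucc, Finset.sum_range_succ']
      have hpt : ∑ k ∈ Finset.range K, F i (cost i) k ≤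
          ∑ k ∈ Finset.range K, F j (cost i) (k + 1) := by
        apply Finset.sum_le_sum
        intro k hk
        rw [Finset.mem_range] at hk
        have hki : (i : ℕ) + k * n < m := (hkey i k i.isLt).mpr (by omega)
        have hkj : (j : ℕ) + (k + 1) * n < m := (hkey j (k + 1) j.isLt).mpr (by omega)
        apply hcomp j k (k + 1) hki hkj
        have h1 : (k + 1) * n = k * n + n := by ring
        have h2 := i.isLt
        omega
      simp only [hSdef]
      linarith
    have hg0a : a ≤ α * g0 := by
      rw [hadef, hg0def]
      exact hFratio j K 0 ((hkey i K i.isLt).mpr hKlt) h0j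
    have hg0nn : 0 ≤ g0 := hFnn j 0
    clear_value g0
    have hKR : (ℓ : ℝ) - 2 ≤ (K : ℝ) := by
      have h2 : ((ℓ - 2 : ℕ) : ℝ) ≤ (K : ℝ) := Nat.cast_le.mpr hKge
      have h3 : ((ℓ - 2 : ℕ) : ℝ) = (ℓ : ℝ) - 2 := by
        have : 2 ≤ ℓ := by omega
        push_cast [this]
        ring
      linarith
    have hβid : (β - 1) * (((ℓ : ℝ) - 2) * (a / α)) + β * (a / α) = a := by
      simp only [hβdef]
      field_simp
      ring
    have h1 : (β - 1) * (((ℓ : ℝ) - 2) * (a / α)) ≤ (β - 1) * S := by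
      apply mul_le_mul_of_nonneg_left _ (by linarith)
      have hu : 0 ≤ a / α := div_nonneg hann hαpos.le
      nlinarith [hSge, hKR, hu]
    have h2 : β * (a / α) ≤ β * g0 := by
      apply mul_le_mul_of_nonneg_left _ (by linarith)
      rw [div_le_iff₀ hαpos]
      linarith [hg0a]
    have h3 : β * (S + g0) ≤ β * ∑ k ∈ Finset.range (L j), F j (cost i) k := by
      apply mul_le_mul_of_nonneg_left hTge (by linarith)
    have h4 : β * (S + g0) = β * S + β * g0 := by ring
    linarith [h1, h2, h3, h4, hβid, hA0nn]
  · -- case B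
    push_neg at hcase
    have hji : (i : ℕ) < (j : ℕ) := by
      by_contra h
      push_neg at h
      exact absurd (hLmono j i h) (by omega)
    have hLjK : L j = K := by
      have := hLge j j.isLt
      have := hLle i
      have := hLle j
      omega
    have hKR : (K : ℝ) = (ℓ : ℝ) - 1 := by
      have hK : K = ℓ - 1 := by
        have := hLge j j.isLt
        have := hLle i
        have := hLle j
        omega
      rw [hK]
      have : 1 ≤ ℓ := by omega
      push_cast [this]
      ring
    have hTge : S ≤ ∑ k ∈ Finset.range (L j), F j (cost i) k := by
      rw [hLjK]
      simp only [hSdef]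
      apply Finset.sum_le_sum
      intro k hk
      rw [Finset.mem_range] at hk
      have hki : (i : ℕ) + k * n < m := (hkey i k i.isLt).mpr (by omega)
      have hkj : (j : ℕ) + k * n < m := (hkey j k j.isLt).mpr (by omega)
      exact hcomp j k k hki hkj (by omega)
    have hA0u : a ≤ α * F i (cost i) 0 := by
      have h0 : (i : ℕ) + 0 * n < m := by simpa using lt_trans i.isLt hnm
      rw [hadef]
      exact hFratio i K 0 ((hkey i K i.isLt).mpr hKlt) h0
    have hA0ge : a / α ≤ F i (cost i) 0 := by
      rw [div_le_iff₀ hαpos]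
      linarith
    have hβid2 : (β - 1) * (((ℓ : ℝ) - 1) * (a / α)) = a - a / α := by
      simp only [hβdef]
      field_simp
      ring
    have h1 : (β - 1) * (((ℓ : ℝ) - 1) * (a / α)) ≤ (β - 1) * S := by
      apply mul_le_mul_of_nonneg_left _ (by linarith)
      rw [← hKR]
      exact hSge
    have h3 : β * S ≤ β * ∑ k ∈ Finset.range (L j), F j (cost i) k := by
      apply mul_le_mul_of_nonneg_left hTge (by linarith)
    linarith [h1, h3, hA0ge, hβid2]
end

section
/- For any number of agents with additive α-ratio-bounded cost functions over m chores with ⌈m/n⌉ ≥ 3, a (1 + (α−1)/(⌈m/n⌉−1))-EFX allocation exists. -/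
namespace ApxEFXAux

noncomputable def argm {m : ℕ} (f : Fin m → ℝ) (s : Finset (Fin m)) (d : Fin m) : Fin m :=
  if h : s.Nonempty then (s.exists_min_image f h).choose else d

lemma argm_mem {m : ℕ} (f : Fin m → ℝ) {s : Finset (Fin m)} (d : Fin m) (h : s.Nonempty) :
    argm f s d ∈ s := by
  rw [argm, dif_pos h]
  exact (s.exists_min_image f h).choose_spec.1

lemma argm_le {m : ℕ} (f : Fin m → ℝ) {s : Finset (Fin m)} (d : Fin m) {x : Fin m} (hx : x ∈ s) :
    f (argm f s d) ≤ f x := by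
  have h : s.Nonempty := ⟨x, hx⟩
  rw [argm, dif_pos h]
  exact (s.exists_min_image f h).choose_spec.2 x hx

noncomputable def remF (n m : ℕ) (hn : 0 < n) (cost : Fin n → Fin m → ℝ) (d : Fin m) :
    ℕ → Finset (Fin m)
  | 0 => Finset.univ
  | p + 1 => (remF n m hn cost d p).erase
      (argm (cost ⟨p % n, Nat.mod_lt p hn⟩) (remF n m hn cost d p) d)

noncomputable def chF (n m : ℕ) (hn : 0 < n) (cost : Fin n → Fin m → ℝ) (d : Fin m)
    (p : ℕ) : Fin m :=
  argm (cost ⟨p % n, Nat.mod_lt p hn⟩) (remF n m hn cost d p) d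

variable {n m : ℕ} {hn : 0 < n} {cost : Fin n → Fin m → ℝ} {d : Fin m}

lemma remF_succ (p : ℕ) :
    remF n m hn cost d (p + 1) = (remF n m hn cost d p).erase (chF n m hn cost d p) := rfl

lemma card_remF : ∀ p, (remF n m hn cost d p).card = m - p
  | 0 => by simp [remF]
  | p + 1 => by
    rw [remF_succ]
    by_cases h : (remF n m hn cost d p).Nonempty
    · have hmem : chF n m hn cost d p ∈ remF n m hn cost d p := argm_mem _ _ h
      have hc : (remF n m hn cost d p).card = m - p := card_remF p
      rw [Finset.card_erase_of_mem hmem, hc]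
      have : 0 < (remF n m hn cost d p).card := Finset.card_pos.mpr h
      omega
    · rw [Finset.not_nonempty_iff_eq_empty] at h
      have hc : (remF n m hn cost d p).card = m - p := card_remF p
      rw [h] at hc ⊢
      simp only [Finset.erase_empty, Finset.card_empty] at hc ⊢
      omega

lemma remF_nonempty (p : ℕ) (hp : p < m) : (remF n m hn cost d p).Nonempty := by
  rw [← Finset.card_pos, card_remF]; omega

lemma chF_mem (p : ℕ) (hp : p < m) : chF n m hn cost d p ∈ remF n m hn cost d p :=
  argm_mem _ _ (remF_nonempty p hp)

lemma remF_subset_succ (p : ℕ) : remF n m hn cost d (p + 1) ⊆ remF n m hn cost d p := by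
  rw [remF_succ]; exact Finset.erase_subset _ _

lemma remF_subset {p q : ℕ} (hpq : p ≤ q) : remF n m hn cost d q ⊆ remF n m hn cost d p := by
  induction q with
  | zero => simp_all
  | succ q ih =>
    rcases Nat.eq_or_lt_of_le hpq with h | h
    · subst h; exact subset_rfl
    · exact (remF_subset_succ q).trans (ih (by omega))

lemma chF_min {p q : ℕ} (hpq : p < q) (hq : q < m) :
    cost ⟨p % n, Nat.mod_lt p hn⟩ (chF n m hn cost d p) ≤
      cost ⟨p % n, Nat.mod_lt p hn⟩ (chF n m hn cost d q) :=
  argm_le _ _ (remF_subset (Nat.le_of_lt hpq) (chF_mem q hq))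

lemma chF_ne {p q : ℕ} (hpq : p < q) (hq : q < m) :
    chF n m hn cost d p ≠ chF n m hn cost d q := by
  intro h
  have h1 : chF n m hn cost d q ∈ remF n m hn cost d (p + 1) :=
    remF_subset hpq (chF_mem q hq)
  rw [remF_succ, ← h] at h1
  exact (Finset.notMem_erase _ _) h1

lemma chF_surj (b : Fin m) : ∃ p < m, chF n m hn cost d p = b := by
  have key : ∀ p, b ∉ remF n m hn cost d p → ∃ q < p, chF n m hn cost d q = b := by
    intro p
    induction p with
    | zero => intro h; exact absurd (Finset.mem_univ b) h
    | succ p ih =>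
      intro h
      by_cases hb : b ∈ remF n m hn cost d p
      · refine ⟨p, Nat.lt_succ_self p, ?_⟩
        rw [remF_succ] at h
        by_contra hne
        exact h (Finset.mem_erase.mpr ⟨fun he => hne he.symm, hb⟩)
      · obtain ⟨q, hq1, hq2⟩ := ih hb
        exact ⟨q, hq1.trans (Nat.lt_succ_self p), hq2⟩
  apply key m
  intro hb
  have hc : (remF n m hn cost d m).card = m - m := card_remF m
  have : remF n m hn cost d m = ∅ := Finset.card_eq_zero.mp (by omega)
  simp [this] at hb

end ApxEFXAux


/-- number of picks of agent `i` (0-indexed, `i < n`) in round robin over `m` items. -/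
def kk (n m i : ℕ) : ℕ := (m - 1 - i) / n + 1

lemma step_lt {n m i : ℕ} (hn : 0 < n) (hi : i < n) (hm : n < m) {r : ℕ}
    (hr : r < kk n m i) : i + r * n < m := by
  have h1 : r ≤ (m - 1 - i) / n := by unfold kk at hr; omega
  have h2 : r * n ≤ m - 1 - i := (Nat.le_div_iff_mul_le hn).mp h1
  omega

lemma lt_kk {n m i : ℕ} (hn : 0 < n) {r : ℕ} (hs : i + r * n < m) : r < kk n m i := by
  have h2 : r * n ≤ m - 1 - i := by omega
  have h1 : r ≤ (m - 1 - i) / n := (Nat.le_div_iff_mul_le hn).mpr h2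
  unfold kk; omega

lemma kk_mono {n m i j : ℕ} (hij : i ≤ j) : kk n m j ≤ kk n m i := by
  unfold kk
  have := Nat.div_le_div_right (c := n) (show m - 1 - j ≤ m - 1 - i by omega)
  omega

lemma kk_le_succ {n m i j : ℕ} (hn : 0 < n) (hj : j < n) : kk n m i ≤ kk n m j + 1 := by
  unfold kk
  have h1 : m - 1 - i ≤ m - 1 - j + n := by omega
  have h2 := Nat.div_le_div_right (c := n) h1
  rw [Nat.add_div_right _ hn] at h2
  omega

lemma kk_zero {n m : ℕ} (hn : 0 < n) (hm : 0 < m) : kk n m 0 = (m + n - 1) / n := by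
  unfold kk
  have : m + n - 1 = (m - 1) + n := by omega
  rw [this, Nat.add_div_right _ hn]; simp


open ApxEFXAux in
/-- for n agents with additive α-ratio-bounded cost functions and
⌈m/n⌉ ≥ 3, a (1 + (α−1)/(⌈m/n⌉−1))-EFX allocation exists. -/
theorem apx_EFX_ratio_bounded (n m : ℕ) (hn : 0 < n)
    (cost : Fin n → Fin m → ℝ) (hnn : ∀ i c, 0 ≤ cost i c)
    (α : ℝ) (hα : 1 ≤ α)
    (hratio : ∀ i (c c' : Fin m), cost i c ≤ α * cost i c')
    (hl : 3 ≤ (m + n - 1) / n) :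
    ∃ X : Fin n → Finset (Fin m),
      (∀ i j : Fin n, i ≠ j → Disjoint (X i) (X j)) ∧
      (∀ b : Fin m, ∃ i : Fin n, b ∈ X i) ∧
      (∀ i j : Fin n, ∀ c ∈ X i,
        ∑ x ∈ X i \ {c}, cost i x ≤
          (1 + (α - 1) / ((((m + n - 1) / n : ℕ) : ℝ) - 1)) * ∑ x ∈ X j, cost i x) := by
  -- basic size facts
  set L : ℕ := (m + n - 1) / n with hL
  have hm : 2 * n + 1 ≤ m := by
    have := (Nat.le_div_iff_mul_le hn).mp hl
    omega
  have hm0 : 0 < m := by omega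
  have hnm : n < m := by omega
  set d : Fin m := ⟨0, hm0⟩ with hd
  set ch : ℕ → Fin m := chF n m hn cost d with hch
  -- the allocation
  set X : Fin n → Finset (Fin m) :=
    fun i => (Finset.range (kk n m i.val)).image (fun r => ch (i.val + r * n)) with hX
  have hstep : ∀ (i : Fin n) {r : ℕ}, r < kk n m i.val → i.val + r * n < m := by
    intro i r hr; exact step_lt hn i.isLt hnm hr
  have hmem_iff : ∀ (i : Fin n) (b : Fin m),
      b ∈ X i ↔ ∃ r < kk n m i.val, ch (i.val + r * n) = b := by
    intro i b
    simp [hX, Finset.mem_image, Finset.mem_range]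
  -- injectivity of ch on steps below m
  have hch_ne : ∀ {p q : ℕ}, p < q → q < m → ch p ≠ ch q := fun h1 h2 => chF_ne h1 h2
  -- key monotonicity for agent i
  have key : ∀ (i : Fin n) (p q : ℕ), p < q → q < m → p % n = i.val →
      cost i (ch p) ≤ cost i (ch q) := by
    intro i p q h1 h2 h3
    have hagent : (⟨p % n, Nat.mod_lt p hn⟩ : Fin n) = i := Fin.ext h3
    have := chF_min (n := n) (m := m) (hn := hn) (cost := cost) (d := d) h1 h2
    rwa [hagent] at this
  -- kk bounds
  have hkkL : ∀ i : Fin n, kk n m i.val ≤ L := by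
    intro i
    rw [hL, ← kk_zero hn hm0]
    exact kk_mono (Nat.zero_le _)
  have hLkk : ∀ i : Fin n, L ≤ kk n m i.val + 1 := by
    intro i
    rw [hL, ← kk_zero hn hm0]
    exact kk_le_succ hn i.isLt
  refine ⟨X, ?_, ?_, ?_⟩
  · -- disjointness
    intro i j hij
    rw [Finset.disjoint_left]
    intro b hbi hbj
    obtain ⟨r, hr, hbr⟩ := (hmem_iff i b).mp hbi
    obtain ⟨s, hs, hbs⟩ := (hmem_iff j b).mp hbj
    have hpm : i.val + r * n < m := hstep i hr
    have hqm : j.val + s * n < m := hstep j hs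
    have heq : i.val + r * n = j.val + s * n := by
      by_contra hne
      rcases Nat.lt_or_ge (i.val + r * n) (j.val + s * n) with h | h
      · exact hch_ne h hqm (hbr.trans hbs.symm)
      · exact hch_ne (by omega) hpm (hbs.trans hbr.symm)
    have : i.val = j.val := by
      have h1 : (i.val + r * n) % n = i.val := by
        rw [Nat.add_mul_mod_self_right, Nat.mod_eq_of_lt i.isLt]
      have h2 : (j.val + s * n) % n = j.val := by
        rw [Nat.add_mul_mod_self_right, Nat.mod_eq_of_lt j.isLt]
      rw [← h1, ← h2, heq]
    exact hij (Fin.ext this)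
  · -- coverage
    intro b
    obtain ⟨p, hp, hpb⟩ := chF_surj (n := n) (m := m) (hn := hn) (cost := cost) (d := d) b
    refine ⟨⟨p % n, Nat.mod_lt p hn⟩, ?_⟩
    rw [hmem_iff]
    refine ⟨p / n, ?_, ?_⟩
    · apply lt_kk hn
      show p % n + p / n * n < m
      rw [Nat.mod_add_div']
      exact hp
    · show ch (p % n + p / n * n) = b
      rw [Nat.mod_add_div']
      exact hpb
  · -- EFX
    have hinj : ∀ (a : Fin n), ∀ r ∈ Finset.range (kk n m a.val),
        ∀ s ∈ Finset.range (kk n m a.val),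
        ch (a.val + r * n) = ch (a.val + s * n) → r = s := by
      intro a r hr s hs heq
      rw [Finset.mem_range] at hr hs
      rcases lt_trichotomy r s with h | h | h
      · have h1 : r * n < s * n := (Nat.mul_lt_mul_right hn).mpr h
        exact absurd heq (hch_ne (by omega) (hstep a hs))
      · exact h
      · have h1 : s * n < r * n := (Nat.mul_lt_mul_right hn).mpr h
        exact absurd heq.symm (hch_ne (by omega) (hstep a hr))
    have hsum : ∀ (a : Fin n) (f : Fin m → ℝ),
        ∑ x ∈ X a, f x = ∑ r ∈ Finset.range (kk n m a.val), f (ch (a.val + r * n)) := by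
      intro a f
      rw [hX]
      exact Finset.sum_image (hinj a)
    intro i j c hc
    set β : ℝ := 1 + (α - 1) / ((L : ℝ) - 1) with hβ
    have hK3 : (3 : ℝ) ≤ (L : ℝ) := by exact_mod_cast hl
    have hK1 : (0 : ℝ) < (L : ℝ) - 1 := by linarith
    have hβ1 : (1 : ℝ) ≤ β := by
      have : 0 ≤ (α - 1) / ((L : ℝ) - 1) := div_nonneg (by linarith) (le_of_lt hK1)
      rw [hβ]; linarith
    have hβnn : (0 : ℝ) ≤ β - 1 := by linarith
    have e1 : (β - 1) * ((L : ℝ) - 1) = α - 1 := by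
      rw [hβ]
      field_simp
      ring
    set G : ℕ → ℝ := fun r => cost i (ch (i.val + r * n)) with hG
    set H : ℕ → ℝ := fun r => cost i (ch (j.val + r * n)) with hH
    have hGnn : ∀ r, 0 ≤ G r := fun r => hnn i _
    have hHnn : ∀ r, 0 ≤ H r := fun r => hnn i _
    have hmodi : ∀ r : ℕ, (i.val + r * n) % n = i.val := by
      intro r
      rw [Nat.add_mul_mod_self_right, Nat.mod_eq_of_lt i.isLt]
    -- G is minimized at 0
    have hG0r : ∀ r, r < kk n m i.val → G 0 ≤ G r := by
      intro r hr
      rcases Nat.eq_zero_or_pos r with h | h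
      · subst h; exact le_refl _
      · have h1 : 0 * n < r * n := (Nat.mul_lt_mul_right hn).mpr h
        exact key i (i.val + 0 * n) (i.val + r * n) (by omega) (hstep i hr) (hmodi 0)
    -- sums
    have hSX : ∑ x ∈ X i, cost i x = ∑ r ∈ Finset.range (kk n m i.val), G r := hsum i (cost i)
    have hSY : ∑ x ∈ X j, cost i x = ∑ r ∈ Finset.range (kk n m j.val), H r := hsum j (cost i)
    have hShnn : 0 ≤ ∑ r ∈ Finset.range (kk n m j.val), H r :=
      Finset.sum_nonneg fun r _ => hHnn r
    -- left-hand side control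
    have hLHS : ∑ x ∈ X i \ {c}, cost i x = ∑ x ∈ X i, cost i x - cost i c := by
      rw [Finset.sum_sdiff_eq_sub (Finset.singleton_subset_iff.mpr hc), Finset.sum_singleton]
    have hcnn : 0 ≤ cost i c := hnn i c
    have hcG0 : G 0 ≤ cost i c := by
      obtain ⟨r, hr, hrc⟩ := (hmem_iff i c).mp hc
      rw [← hrc]
      exact hG0r r hr
    by_cases hij : i = j
    · -- trivial case i = j
      subst hij
      rw [hLHS, hSX]
      have hSnn : 0 ≤ ∑ r ∈ Finset.range (kk n m i.val), G r :=
        Finset.sum_nonneg fun r _ => hGnn r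
      have hbs : 0 ≤ (β - 1) * ∑ r ∈ Finset.range (kk n m i.val), G r :=
        mul_nonneg hβnn hSnn
      linarith
    · -- i ≠ j
      have hijv : i.val ≠ j.val := fun h => hij (Fin.ext h)
      have hk2 : 2 ≤ kk n m i.val := by
        have h1 := hLkk i
        have h2 := hkkL i
        omega
      obtain ⟨k', hkk⟩ : ∃ k', kk n m i.val = k' + 1 := ⟨kk n m i.val - 1, by omega⟩
      have hSgA : ∑ r ∈ Finset.range (kk n m i.val), G r
          = (∑ r ∈ Finset.range k', G (r + 1)) + G 0 := by
        rw [hkk]; exact Finset.sum_range_succ' G k'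
      have hSgB : ∑ r ∈ Finset.range (kk n m i.val), G r
          = (∑ r ∈ Finset.range k', G r) + G k' := by
        rw [hkk]; exact Finset.sum_range_succ G k'
      set A := ∑ r ∈ Finset.range k', G (r + 1) with hA
      set B := ∑ r ∈ Finset.range k', G r with hBdef
      set Sh := ∑ r ∈ Finset.range (kk n m j.val), H r with hShdef
      -- goal reduces to A ≤ β * Sh
      have hmain : A ≤ β * Sh := by
        rcases Nat.lt_or_ge i.val j.val with hij' | hij'
        · -- i before j : l ≤ k ≤ l + 1
          have hlk1 : kk n m j.val ≤ kk n m i.val := kk_mono (le_of_lt hij')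
          have hlk2 : kk n m i.val ≤ kk n m j.val + 1 := kk_le_succ hn j.isLt
          have hGH : ∀ r, r < kk n m j.val → G r ≤ H r := by
            intro r hr
            exact key i (i.val + r * n) (j.val + r * n) (by omega) (hstep j hr) (hmodi r)
          rcases Nat.eq_or_lt_of_le hlk1 with hl | hl
          · -- l = k
            have hSg_le : (∑ r ∈ Finset.range (kk n m i.val), G r) ≤ Sh := by
              rw [hShdef, ← hl]
              exact Finset.sum_le_sum fun r hr => hGH r (Finset.mem_range.mp hr)
            have hAle : A ≤ ∑ r ∈ Finset.range (kk n m i.val), G r := by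
              rw [hSgA]; linarith [hGnn 0]
            have hbs : 0 ≤ (β - 1) * Sh := mul_nonneg hβnn hShnn
            linarith
          · -- l = k - 1 = k',  and then k = L
            have hlk' : kk n m j.val = k' := by omega
            have hkL : kk n m i.val = L := by
              have h1 := hkkL i
              have h2 := hLkk j
              omega
            have hBSh : B ≤ Sh := by
              rw [hShdef, hlk', hBdef]
              exact Finset.sum_le_sum fun r hr =>
                hGH r (by rw [hlk']; exact Finset.mem_range.mp hr)
            have hBk : (k' : ℝ) * G 0 ≤ B := by
              have h1 : ∑ r ∈ Finset.range k', G 0 ≤ B :=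
                Finset.sum_le_sum fun r hr => hG0r r (by have := Finset.mem_range.mp hr; omega)
              rwa [Finset.sum_const, Finset.card_range, nsmul_eq_mul] at h1
            have hak : G k' ≤ α * G 0 := hratio i _ _
            have hkK : (k' : ℝ) = (L : ℝ) - 1 := by
              have : k' + 1 = L := by omega
              have := congrArg (fun t : ℕ => (t : ℝ)) this
              push_cast at this
              linarith
            have e2 : (α - 1) * G 0 = (β - 1) * ((k' : ℝ) * G 0) := by
              rw [hkK, ← e1]; ring
            have p1 : (β - 1) * ((k' : ℝ) * G 0) ≤ (β - 1) * B :=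
              mul_le_mul_of_nonneg_left hBk hβnn
            have p2 : β * B ≤ β * Sh :=
              mul_le_mul_of_nonneg_left hBSh (by linarith)
            have hABG : A = B + G k' - G 0 := by
              have := hSgA
              rw [hSgB] at this
              linarith
            have hG0nn := hGnn 0
            linarith
        · -- j before i : k ≤ l ≤ k + 1
          have hij'' : j.val < i.val := by omega
          have hlk1 : kk n m i.val ≤ kk n m j.val := kk_mono (le_of_lt hij'')
          have hlk2 : kk n m j.val ≤ kk n m i.val + 1 := kk_le_succ hn i.isLt
          have hGH' : ∀ r, r + 1 < kk n m j.val → G r ≤ H (r + 1) := by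
            intro r hr
            have hmul : (r + 1) * n = r * n + n := by ring
            exact key i (i.val + r * n) (j.val + (r + 1) * n)
              (by omega) (hstep j hr) (hmodi r)
          rcases Nat.eq_or_lt_of_le hlk1 with hl | hl
          · -- l = k
            have hShsplit : Sh = (∑ r ∈ Finset.range k', H (r + 1)) + H 0 := by
              rw [hShdef, ← hl, hkk]
              exact Finset.sum_range_succ' H k'
            have hBSh' : B ≤ ∑ r ∈ Finset.range k', H (r + 1) := by
              rw [hBdef]
              refine Finset.sum_le_sum fun r hr => hGH' r ?_
              have := Finset.mem_range.mp hr
              omega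
            -- x = min (G 0) (H 0)
            set x := min (G 0) (H 0) with hx
            have hxg : x ≤ G 0 := min_le_left _ _
            have hxh : x ≤ H 0 := min_le_right _ _
            have hx0 : 0 ≤ x := le_min (hGnn 0) (hHnn 0)
            have hgkx : G k' ≤ α * x := by
              rcases le_total (G 0) (H 0) with h | h
              · rw [hx, min_eq_left h]; exact hratio i _ _
              · rw [hx, min_eq_right h]; exact hratio i _ _
            have hBk : (k' : ℝ) * x ≤ B := by
              have h1 : ∑ r ∈ Finset.range k', x ≤ B := by
                refine Finset.sum_le_sum fun r hr => ?_
                have hr' := Finset.mem_range.mp hr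
                exact hxg.trans (hG0r r (by omega))
              rwa [Finset.sum_const, Finset.card_range, nsmul_eq_mul] at h1
            have hk'K : (L : ℝ) - 2 ≤ (k' : ℝ) := by
              have h1 := hLkk i
              have h2 : (L : ℝ) ≤ (k' : ℝ) + 2 := by exact_mod_cast (show L ≤ k' + 2 by omega)
              linarith
            have e2 : (α - 1) * x = (β - 1) * (((L : ℝ) - 2) * x) + (β - 1) * x := by
              rw [← e1]; ring
            have p1 : (β - 1) * (((L : ℝ) - 2) * x) ≤ (β - 1) * B := by
              apply mul_le_mul_of_nonneg_left _ hβnn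
              calc ((L : ℝ) - 2) * x ≤ (k' : ℝ) * x := by
                    exact mul_le_mul_of_nonneg_right hk'K hx0
                _ ≤ B := hBk
            have p2 : (β - 1) * x ≤ (β - 1) * H 0 := mul_le_mul_of_nonneg_left hxh hβnn
            have hABG : A = B + G k' - G 0 := by
              have := hSgA
              rw [hSgB] at this
              linarith
            have p3 : β * ((∑ r ∈ Finset.range k', H (r + 1)) + H 0) ≤ β * Sh := by
              rw [hShsplit]
            have p4 : β * B ≤ β * (∑ r ∈ Finset.range k', H (r + 1)) :=
              mul_le_mul_of_nonneg_left hBSh' (by linarith)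
            have hH0nn := hHnn 0
            linarith [p1, p2, p3, p4, e2, hABG, hgkx, hxg, hx0, hH0nn]
          · -- l = k + 1
            have hll : kk n m j.val = kk n m i.val + 1 := by omega
            have hShsplit : Sh = (∑ r ∈ Finset.range (kk n m i.val), H (r + 1)) + H 0 := by
              rw [hShdef, hll]
              exact Finset.sum_range_succ' H (kk n m i.val)
            have hSgSh : (∑ r ∈ Finset.range (kk n m i.val), G r)
                ≤ ∑ r ∈ Finset.range (kk n m i.val), H (r + 1) := by
              refine Finset.sum_le_sum fun r hr => hGH' r ?_
              have := Finset.mem_range.mp hr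
              omega
            have hAle : A ≤ ∑ r ∈ Finset.range (kk n m i.val), G r := by
              rw [hSgA]; linarith [hGnn 0]
            have hSh2 : A ≤ Sh := by
              rw [hShsplit]
              have := hHnn 0
              linarith
            have hbs : 0 ≤ (β - 1) * Sh := mul_nonneg hβnn hShnn
            linarith
      rw [hLHS, hSX, hSgA, hSY]
      have : A + G 0 - cost i c ≤ A := by linarith
      linarith
end

section
/- The output of the round-robin algorithm after ℓ ≥ 3 rounds is a tEFX allocation when all agents have additive 2-ratio-bounded cost functions. -/
/-- the round-robin output after ℓ = ⌈m/n⌉ ≥ 3 rounds is tEFX for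
additive 2-ratio-bounded cost functions. -/
theorem roundRobin_tEFX (n m : ℕ) (hn : 0 < n)
    (cost : Fin n → Fin m → ℝ) (hnn : ∀ i c, 0 ≤ cost i c)
    (hratio : ∀ i (c c' : Fin m), cost i c ≤ 2 * cost i c')
    (hl : 3 ≤ (m + n - 1) / n)
    (X : Fin n → Finset (Fin m))
    (hX : IsRoundRobin n m hn cost X) :
    ∀ i j : Fin n, ∀ c ∈ X i,
      ∑ x ∈ X i \ {c}, cost i x ≤ ∑ x ∈ X j ∪ {c}, cost i x := by
  obtain ⟨p, hmem, hord⟩ := hX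
  have hm : 2 * n + 1 ≤ m := by
    have := (Nat.le_div_iff_mul_le hn).mp hl
    omega
  intro i j c hc
  by_cases hij : i = j
  · subst hij
    have h1 : X i ∪ {c} = X i := Finset.union_eq_left.2 (Finset.singleton_subset_iff.2 hc)
    rw [h1]
    exact Finset.sum_le_sum_of_subset_of_nonneg Finset.sdiff_subset (fun x _ _ => hnn i x)
  · have hi := i.isLt
    have hj := j.isLt
    have hij' : (i : ℕ) ≠ (j : ℕ) := fun h => hij (Fin.ext h)
    set d : ℕ := if (i : ℕ) < (j : ℕ) then (j : ℕ) - i else n + (j : ℕ) - i with hd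
    have hd0 : 0 < d := by rw [hd]; split <;> omega
    have hdn : d < n := by rw [hd]; split <;> omega
    have hmod : ∀ s : ℕ, s % n = (i : ℕ) → (s + d) % n = (j : ℕ) := by
      intro s hs
      rw [Nat.add_mod, hs, Nat.mod_eq_of_lt hdn, hd]
      split
      · have h2 : (i : ℕ) + ((j : ℕ) - i) = j := by omega
        rw [h2, Nat.mod_eq_of_lt hj]
      · have h2 : (i : ℕ) + (n + (j : ℕ) - i) = n + j := by omega
        rw [h2, Nat.add_mod_left, Nat.mod_eq_of_lt hj]
    obtain ⟨a, haX, hamax⟩ :=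
      Finset.exists_max_image (X i) (fun x => ((p.symm x : Fin m) : ℕ)) ⟨c, hc⟩
    set D : Fin m := ⟨d, by omega⟩ with hD
    set f : Fin m → Fin m := fun x => p (p.symm x + D) with hf
    -- step bound for non-last picks
    have hstep : ∀ x ∈ X i \ {a}, ((p.symm x : Fin m) : ℕ) + d < m := by
      intro x hx
      obtain ⟨hxX, hxa⟩ := Finset.mem_sdiff.mp hx
      rw [Finset.mem_singleton] at hxa
      have hs : ((p.symm x : Fin m) : ℕ) % n = (i : ℕ) := (hmem i x).mp hxX
      have hsa : ((p.symm a : Fin m) : ℕ) % n = (i : ℕ) := (hmem i a).mp haX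
      have hle : ((p.symm x : Fin m) : ℕ) ≤ ((p.symm a : Fin m) : ℕ) := hamax x hxX
      have hne : ((p.symm x : Fin m) : ℕ) ≠ ((p.symm a : Fin m) : ℕ) :=
        fun h => hxa (p.symm.injective (Fin.ext h))
      have hdvd : n ∣ ((p.symm a : Fin m) : ℕ) - ((p.symm x : Fin m) : ℕ) :=
        (Nat.modEq_iff_dvd' hle).mp (by show _ % n = _ % n; rw [hs, hsa])
      have hge := Nat.le_of_dvd (by omega) hdvd
      have hlt := (p.symm a).isLt
      omega
    have hval : ∀ x ∈ X i \ {a}, ((p.symm x + D : Fin m) : ℕ) = ((p.symm x : Fin m) : ℕ) + d := by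
      intro x hx
      have : ((p.symm x + D : Fin m) : ℕ) = (((p.symm x : Fin m) : ℕ) + d) % m := by
        rw [Fin.add_def]
      rw [this]
      exact Nat.mod_eq_of_lt (hstep x hx)
    have himg : ∀ x ∈ X i \ {a}, f x ∈ X j := by
      intro x hx
      have hs : ((p.symm x : Fin m) : ℕ) % n = (i : ℕ) :=
        (hmem i x).mp (Finset.mem_sdiff.mp hx).1
      rw [hf]
      refine (hmem j _).mpr ?_
      rw [Equiv.symm_apply_apply, hval x hx]
      exact hmod _ hs
    have hcost : ∀ x ∈ X i \ {a}, cost i x ≤ cost i (f x) := by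
      intro x hx
      have hs : ((p.symm x : Fin m) : ℕ) % n = (i : ℕ) :=
        (hmem i x).mp (Finset.mem_sdiff.mp hx).1
      have hlt : ((p.symm x : Fin m) : ℕ) < ((p.symm x + D : Fin m) : ℕ) := by
        rw [hval x hx]; omega
      have h := hord (p.symm x) (p.symm x + D) hlt
      simp only [Equiv.apply_symm_apply] at h
      have heq : (⟨((p.symm x : Fin m) : ℕ) % n, Nat.mod_lt _ hn⟩ : Fin n) = i := Fin.ext hs
      rwa [heq] at h
    have hinj : ∀ x ∈ X i \ {a}, ∀ y ∈ X i \ {a}, f x = f y → x = y := by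
      intro x hx y hy hxy
      rw [hf] at hxy
      have h1 : p.symm x + D = p.symm y + D := p.injective hxy
      have h2 : ((p.symm x + D : Fin m) : ℕ) = ((p.symm y + D : Fin m) : ℕ) := by rw [h1]
      rw [hval x hx, hval y hy] at h2
      exact p.symm.injective (Fin.ext (by omega))
    have hsum1 : ∑ x ∈ X i \ {a}, cost i x ≤ ∑ x ∈ X j, cost i x := by
      calc ∑ x ∈ X i \ {a}, cost i x
          ≤ ∑ x ∈ X i \ {a}, cost i (f x) := Finset.sum_le_sum hcost
        _ = ∑ x ∈ (X i \ {a}).image f, cost i x := (Finset.sum_image hinj).symm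
        _ ≤ ∑ x ∈ X j, cost i x := by
            refine Finset.sum_le_sum_of_subset_of_nonneg ?_ (fun x _ _ => hnn i x)
            intro x hx
            obtain ⟨y, hy, rfl⟩ := Finset.mem_image.mp hx
            exact himg y hy
    have hca : cost i a ≤ 2 * cost i c := hratio i a c
    have hcnn := hnn i c
    have hsub_c : ∑ x ∈ X i \ {c}, cost i x = ∑ x ∈ X i, cost i x - cost i c := by
      rw [Finset.sum_sdiff_eq_sub (Finset.singleton_subset_iff.2 hc), Finset.sum_singleton]
    have hsub_a : ∑ x ∈ X i \ {a}, cost i x = ∑ x ∈ X i, cost i x - cost i a := by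
      rw [Finset.sum_sdiff_eq_sub (Finset.singleton_subset_iff.2 haX), Finset.sum_singleton]
    have hcXj : c ∉ X j := by
      intro h
      have h1 := (hmem j c).mp h
      have h2 := (hmem i c).mp hc
      omega
    have hRHS : ∑ x ∈ X j ∪ {c}, cost i x = ∑ x ∈ X j, cost i x + cost i c := by
      rw [Finset.sum_union (Finset.disjoint_singleton_right.2 hcXj), Finset.sum_singleton]
    linarith
end

section
/- For any number of agents with additive α-ratio-bounded cost functions, if m ≥ αn (and ⌈m/n⌉ ≥ 3), then a 2-EFX allocation exists. -/
open Finset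

section RoundRobin

variable {n m : ℕ}

noncomputable def rrArg (cost : Fin n → Fin m → ℝ) (hn : 0 < n) (hm : 0 < m)
    (u : ℕ) (s : Finset (Fin m)) : Fin m :=
  if h : s.Nonempty then (Finset.exists_min_image s (cost ⟨u % n, Nat.mod_lt u hn⟩) h).choose
  else ⟨0, hm⟩

noncomputable def rrRem (cost : Fin n → Fin m → ℝ) (hn : 0 < n) (hm : 0 < m) : ℕ → Finset (Fin m)
  | 0 => Finset.univ
  | u + 1 => (rrRem cost hn hm u).erase (rrArg cost hn hm u (rrRem cost hn hm u))

noncomputable def rrPick (cost : Fin n → Fin m → ℝ) (hn : 0 < n) (hm : 0 < m) (u : ℕ) : Fin m :=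
  rrArg cost hn hm u (rrRem cost hn hm u)

variable {cost : Fin n → Fin m → ℝ} {hn : 0 < n} {hm : 0 < m}

lemma rrArg_mem {u : ℕ} {s : Finset (Fin m)} (h : s.Nonempty) : rrArg cost hn hm u s ∈ s := by
  rw [rrArg, dif_pos h]
  exact (Finset.exists_min_image s _ h).choose_spec.1

lemma rrArg_min {u : ℕ} {s : Finset (Fin m)} (h : s.Nonempty) {x} (hx : x ∈ s) :
    cost ⟨u % n, Nat.mod_lt u hn⟩ (rrArg cost hn hm u s) ≤ cost ⟨u % n, Nat.mod_lt u hn⟩ x := by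
  rw [rrArg, dif_pos h]
  exact (Finset.exists_min_image s _ h).choose_spec.2 x hx

lemma rrRem_card (u : ℕ) (hu : u ≤ m) : (rrRem cost hn hm u).card = m - u := by
  induction u with
  | zero => simp [rrRem]
  | succ k ih =>
    have hk : k ≤ m := by omega
    have h1 : (rrRem cost hn hm k).Nonempty := by
      rw [← Finset.card_pos, ih hk]; omega
    rw [rrRem, Finset.card_erase_of_mem (rrArg_mem h1), ih hk]; omega

lemma rrRem_nonempty {u : ℕ} (hu : u < m) : (rrRem cost hn hm u).Nonempty := by
  rw [← Finset.card_pos, rrRem_card u (by omega)]; omega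

lemma rrPick_mem {u : ℕ} (hu : u < m) : rrPick cost hn hm u ∈ rrRem cost hn hm u :=
  rrArg_mem (rrRem_nonempty hu)

lemma rrRem_subset {u v : ℕ} (huv : u ≤ v) : rrRem cost hn hm v ⊆ rrRem cost hn hm u := by
  induction v with
  | zero => simp_all
  | succ k ih =>
    rcases Nat.eq_or_lt_of_le huv with h | h
    · rw [h]
    · exact (Finset.erase_subset _ _).trans (ih (by omega))

lemma rrPick_ne {u v : ℕ} (huv : u < v) (hv : v < m) :
    rrPick cost hn hm u ≠ rrPick cost hn hm v := by
  intro he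
  have h1 : rrPick cost hn hm v ∈ rrRem cost hn hm (u + 1) :=
    rrRem_subset huv (rrPick_mem hv)
  rw [← he] at h1
  exact Finset.notMem_erase _ _ h1

lemma rrPick_le {u v : ℕ} (i : Fin n) (hui : u % n = i.val) (huv : u < v) (hv : v < m) :
    cost i (rrPick cost hn hm u) ≤ cost i (rrPick cost hn hm v) := by
  have hi : (⟨u % n, Nat.mod_lt u hn⟩ : Fin n) = i := Fin.ext hui
  have h1 : rrPick cost hn hm v ∈ rrRem cost hn hm u :=
    rrRem_subset (by omega) (rrPick_mem hv)
  have h2 := rrArg_min (cost := cost) (hn := hn) (hm := hm) (u := u)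
    (rrRem_nonempty (by omega)) h1
  rwa [hi] at h2

end RoundRobin

/-- for n agents with additive α-ratio-bounded cost functions and m ≥ αn
(with ⌈m/n⌉ ≥ 3), a 2-EFX allocation exists. -/
theorem two_EFX_ratio_bounded (n m : ℕ) (hn : 0 < n)
    (cost : Fin n → Fin m → ℝ) (hnn : ∀ i c, 0 ≤ cost i c)
    (α : ℝ) (hα : 1 ≤ α)
    (hratio : ∀ i (c c' : Fin m), cost i c ≤ α * cost i c')
    (hm : α * n ≤ (m : ℝ))
    (hl : 3 ≤ (m + n - 1) / n) :
    ∃ X : Fin n → Finset (Fin m),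
      (∀ i j : Fin n, i ≠ j → Disjoint (X i) (X j)) ∧
      (∀ b : Fin m, ∃ i : Fin n, b ∈ X i) ∧
      (∀ i j : Fin n, ∀ c ∈ X i,
        ∑ x ∈ X i \ {c}, cost i x ≤ 2 * ∑ x ∈ X j, cost i x) := by
  -- basic numeric facts
  have hm2n : 2 * n + 1 ≤ m := by
    have h3 : 3 * n ≤ m + n - 1 := (Nat.le_div_iff_mul_le hn).mp hl
    omega
  have hm0 : 0 < m := by omega
  have hnm : n ≤ m := by omega
  set pick : ℕ → Fin m := rrPick cost hn hm0 with hpickdef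
  -- bundle sizes
  set s : Fin n → ℕ := fun i => (m - i.val + n - 1) / n with hsdef
  have hs_iff : ∀ (i : Fin n) (t : ℕ), t < s i ↔ i.val + t * n < m := by
    intro i t
    have hi := i.isLt
    obtain ⟨w, hw⟩ : ∃ w, t * n = w := ⟨_, rfl⟩
    have h1 : (t + 1 ≤ (m - i.val + n - 1) / n) ↔ ((t + 1) * n ≤ m - i.val + n - 1) :=
      Nat.le_div_iff_mul_le hn
    rw [add_one_mul, hw] at h1
    simp only [hsdef]
    rw [Nat.lt_iff_add_one_le, h1, hw]
    omega
  have hs_mono : ∀ i j : Fin n, i.val ≤ j.val → s j ≤ s i := by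
    intro i j h
    have hi := i.isLt; have hj := j.isLt
    exact Nat.div_le_div_right (by omega)
  have hs_le1 : ∀ i j : Fin n, s i ≤ s j + 1 := by
    intro i j
    have hi := i.isLt; have hj := j.isLt
    have h1 : m - i.val + n - 1 ≤ (m - j.val + n - 1) + n := by omega
    calc s i ≤ ((m - j.val + n - 1) + n) / n := Nat.div_le_div_right h1
      _ = s j + 1 := Nat.add_div_right _ hn
  have hq_le_s : ∀ j : Fin n, m / n ≤ s j := by
    intro j
    have hj := j.isLt
    exact Nat.div_le_div_right (by omega)
  have hs2 : ∀ j : Fin n, 2 ≤ s j := by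
    intro j
    have hq2 : 2 ≤ m / n := (Nat.le_div_iff_mul_le hn).mpr (by omega)
    exact le_trans hq2 (hq_le_s j)
  -- picks are injective
  have hpick_inj : ∀ u v : ℕ, u < m → v < m → pick u = pick v → u = v := by
    intro u v hu hv he
    by_contra hne
    rcases Nat.lt_or_ge u v with h | h
    · exact rrPick_ne h hv he
    · exact rrPick_ne (by omega) hu he.symm
  have hmod : ∀ (i : Fin n) (t : ℕ), (i.val + t * n) % n = i.val := by
    intro i t
    rw [Nat.add_mul_mod_self_right, Nat.mod_eq_of_lt i.isLt]
  -- the allocation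
  set X : Fin n → Finset (Fin m) :=
    fun i => (Finset.range (s i)).image (fun t => pick (i.val + t * n)) with hXdef
  refine ⟨X, ?_, ?_, ?_⟩
  · -- disjointness
    intro i j hij
    rw [Finset.disjoint_left]
    intro x hxi hxj
    simp only [hXdef, Finset.mem_image, Finset.mem_range] at hxi hxj
    obtain ⟨t, ht, hxt⟩ := hxi
    obtain ⟨t', ht', hxt'⟩ := hxj
    have h1 : i.val + t * n < m := (hs_iff i t).mp ht
    have h2 : j.val + t' * n < m := (hs_iff j t').mp ht'
    have h3 := hpick_inj _ _ h1 h2 (hxt.trans hxt'.symm)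
    apply hij
    apply Fin.ext
    have h4 : (i.val + t * n) % n = (j.val + t' * n) % n := by rw [h3]
    rwa [hmod, hmod] at h4
  · -- coverage
    intro b
    have hinj : Function.Injective (fun u : Fin m => pick u.val) := by
      intro u v h
      exact Fin.ext (hpick_inj _ _ u.isLt v.isLt h)
    obtain ⟨u, hu⟩ := (Finite.injective_iff_surjective.mp hinj) b
    refine ⟨⟨u.val % n, Nat.mod_lt _ hn⟩, ?_⟩
    simp only [hXdef, Finset.mem_image, Finset.mem_range]
    refine ⟨u.val / n, ?_, ?_⟩
    · rw [hs_iff]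
      simp only [Nat.mod_add_div']
      exact u.isLt
    · rw [Nat.mod_add_div']
      exact hu
  · -- the 2-EFX property
    intro i j c hc
    set F : ℕ → ℝ := fun u => cost i (pick u) with hFdef
    have hsum : ∀ k : Fin n, ∑ x ∈ X k, cost i x = ∑ t ∈ Finset.range (s k), F (k.val + t * n) := by
      intro k
      rw [hXdef]
      rw [Finset.sum_image]
      intro t ht t' ht' he
      rw [Finset.mem_coe, Finset.mem_range] at ht ht'
      have h1 := hpick_inj _ _ ((hs_iff k t).mp ht) ((hs_iff k t').mp ht') he
      have h2 : t * n = t' * n := by omega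
      exact Nat.eq_of_mul_eq_mul_right hn h2
    obtain ⟨c₀, -, hc₀⟩ := Finset.exists_min_image Finset.univ (cost i) ⟨c, Finset.mem_univ c⟩
    set μ := cost i c₀ with hμdef
    have hμ0 : 0 ≤ μ := hnn i c₀
    have hFlb : ∀ u, μ ≤ F u := fun u => hc₀ _ (Finset.mem_univ _)
    have hFub : ∀ u, F u ≤ α * μ := fun u => hratio i _ c₀
    have hF0 : ∀ u, 0 ≤ F u := fun u => hnn i _
    have hFle : ∀ u v : ℕ, u % n = i.val → u < v → v < m → F u ≤ F v :=
      fun u v h1 h2 h3 => rrPick_le i h1 h2 h3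
    set B := ∑ t ∈ Finset.range (s j), F (j.val + t * n) with hBdef
    have hBμ : (s j : ℝ) * μ ≤ B := by
      calc (s j : ℝ) * μ = ∑ _t ∈ Finset.range (s j), μ := by
            rw [Finset.sum_const, Finset.card_range, nsmul_eq_mul]
        _ ≤ B := Finset.sum_le_sum (fun t _ => hFlb _)
    have hαs : α - 1 ≤ (s j : ℝ) := by
      have h1 := Nat.div_add_mod m n
      have h2 := Nat.mod_lt m hn
      have h3 : m < n * (m / n) + n := by omega
      have h4 : (m : ℝ) < (n : ℝ) * ((m / n : ℕ) : ℝ) + n := by exact_mod_cast h3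
      have h5 : ((m / n : ℕ) : ℝ) ≤ ((s j : ℕ) : ℝ) := Nat.cast_le.mpr (hq_le_s j)
      have h6 : (0 : ℝ) < n := by exact_mod_cast hn
      nlinarith [hm]
    have hα1μ : 0 ≤ (α - 1) * μ := mul_nonneg (by linarith) hμ0
    -- the key sum inequality
    have hABkey : ∑ t ∈ Finset.Ico 1 (s i), F (i.val + t * n) ≤ B + (α - 1) * μ := by
      have hBsplit : B = F (j.val + 0 * n) + ∑ t ∈ Finset.Ico 1 (s j), F (j.val + t * n) := by
        rw [hBdef, Finset.sum_range_eq_add_Ico _ (by have := hs2 j; omega)]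
      rcases le_or_gt i.val j.val with hle | hlt
      · -- i before (or equal to) j in the round order
        have hcmp : ∀ t, t < s j → F (i.val + t * n) ≤ F (j.val + t * n) := by
          intro t ht
          rcases eq_or_lt_of_le hle with h | h
          · rw [h]
          · exact hFle _ _ (hmod i t) (by omega) ((hs_iff j t).mp ht)
        have hsji : s j ≤ s i := hs_mono i j hle
        have hsij : s i ≤ s j + 1 := hs_le1 i j
        rcases eq_or_lt_of_le hsji with hss | hss
        · -- equal sizes
          rw [← hss]
          have h1 : ∑ t ∈ Finset.Ico 1 (s j), F (i.val + t * n)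
              ≤ ∑ t ∈ Finset.Ico 1 (s j), F (j.val + t * n) :=
            Finset.sum_le_sum (fun t ht => hcmp t (Finset.mem_Ico.mp ht).2)
          have h2 := hF0 (j.val + 0 * n)
          linarith
        · -- s i = s j + 1
          have hsi : s i = s j + 1 := by omega
          rw [hsi, Finset.sum_Ico_succ_top (by have := hs2 j; omega)]
          have h1 : ∑ t ∈ Finset.Ico 1 (s j), F (i.val + t * n)
              ≤ ∑ t ∈ Finset.Ico 1 (s j), F (j.val + t * n) :=
            Finset.sum_le_sum (fun t ht => hcmp t (Finset.mem_Ico.mp ht).2)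
          have h2 : F (i.val + s j * n) ≤ α * μ := hFub _
          have h3 : μ ≤ F (j.val + 0 * n) := hFlb _
          linarith
      · -- j before i in the round order
        have hcmp : ∀ t, t + 1 < s j → F (i.val + t * n) ≤ F (j.val + (t + 1) * n) := by
          intro t ht
          apply hFle _ _ (hmod i t) ?_ ((hs_iff j (t + 1)).mp ht)
          obtain ⟨w, hw⟩ : ∃ w, t * n = w := ⟨_, rfl⟩
          have hi := i.isLt
          rw [add_one_mul, hw]
          omega
        have hre : ∀ k : ℕ, ∑ t ∈ Finset.Ico 1 k, F (j.val + (t + 1) * n)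
            = ∑ t ∈ Finset.Ico 2 (k + 1), F (j.val + t * n) := by
          intro k
          have h := Finset.sum_Ico_add' (fun t => F (j.val + t * n)) 1 k 1
          simpa using h
        have hBsplit2 : B = F (j.val + 0 * n) + F (j.val + 1 * n)
            + ∑ t ∈ Finset.Ico 2 (s j), F (j.val + t * n) := by
          rw [hBsplit, Finset.sum_eq_sum_Ico_succ_bot (by have := hs2 j; omega : 1 < s j)]
          ring
        have hsij : s i ≤ s j := hs_mono j i (le_of_lt hlt)
        have hsji : s j ≤ s i + 1 := hs_le1 j i
        rcases eq_or_lt_of_le hsij with hss | hss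
        · -- equal sizes: one overflow term, two unmatched terms in X j
          have h2si : 2 ≤ s i := hs2 i
          rw [show s i = (s i - 1) + 1 by omega, Finset.sum_Ico_succ_top (by omega)]
          have h1 : ∑ t ∈ Finset.Ico 1 (s i - 1), F (i.val + t * n)
              ≤ ∑ t ∈ Finset.Ico 1 (s i - 1), F (j.val + (t + 1) * n) := by
            apply Finset.sum_le_sum
            intro t ht
            have ht2 := (Finset.mem_Ico.mp ht).2
            exact hcmp t (by omega)
          rw [hre (s i - 1), show (s i - 1) + 1 = s i by omega] at h1
          have h2 : F (i.val + (s i - 1) * n) ≤ α * μ := hFub _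
          have h3 : μ ≤ F (j.val + 0 * n) := hFlb _
          have h4 : μ ≤ F (j.val + 1 * n) := hFlb _
          rw [← hss] at hBsplit2
          linarith
        · -- s j = s i + 1: everything matches
          have hsj : s j = s i + 1 := by omega
          have h1 : ∑ t ∈ Finset.Ico 1 (s i), F (i.val + t * n)
              ≤ ∑ t ∈ Finset.Ico 1 (s i), F (j.val + (t + 1) * n) := by
            apply Finset.sum_le_sum
            intro t ht
            have ht2 := (Finset.mem_Ico.mp ht).2
            exact hcmp t (by omega)
          rw [hre (s i), ← hsj] at h1
          have h3 : 0 ≤ F (j.val + 0 * n) := hF0 _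
          have h4 : 0 ≤ F (j.val + 1 * n) := hF0 _
          rw [hBsplit2]
          linarith
    -- rewrite the left-hand side
    obtain ⟨t₀, ht₀, hct₀⟩ : ∃ t₀, t₀ < s i ∧ pick (i.val + t₀ * n) = c := by
      simp only [hXdef, Finset.mem_image, Finset.mem_range] at hc
      obtain ⟨t₀, h1, h2⟩ := hc
      exact ⟨t₀, h1, h2⟩
    have hLHS : ∑ x ∈ X i \ {c}, cost i x
        = (∑ t ∈ Finset.range (s i), F (i.val + t * n)) - cost i c := by
      rw [← Finset.erase_eq, Finset.sum_erase_eq_sub hc, hsum i]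
    have hcge : F (i.val + 0 * n) ≤ cost i c := by
      rcases Nat.eq_zero_or_pos t₀ with h | h
      · rw [← hct₀, h]
      · rw [← hct₀]
        apply hFle _ _ (hmod i 0) ?_ ((hs_iff i t₀).mp ht₀)
        have := Nat.mul_pos h hn
        omega
    have hsplit : ∑ t ∈ Finset.range (s i), F (i.val + t * n)
        = F (i.val + 0 * n) + ∑ t ∈ Finset.Ico 1 (s i), F (i.val + t * n) :=
      Finset.sum_range_eq_add_Ico _ (by have := hs2 i; omega)
    rw [hLHS, hsum j, ← hBdef]
    have hABμ : (α - 1) * μ ≤ B := by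
      have h1 : (α - 1) * μ ≤ (s j : ℝ) * μ := mul_le_mul_of_nonneg_right hαs hμ0
      linarith
    linarith
end

section
/- In the round-robin allocation for an agent i who picks before agent j, if after ℓ ≥ 3 rounds agent i has ℓ chores c^1_i,...,c^ℓ_i (picked in nondecreasing order of C_i-cost) and agent j has ℓ−1 chores c^1_j,...,c^{ℓ−1}_j with C_i(c^t_i) ≤ C_i(c^t_j) for all t ≤ ℓ−1, and C_i is additive α-ratio-bounded, then for every c ∈ X_i: C_i(X_i \ {c}) ≤ (1 + (α−1)/(ℓ−1))·C_i(X_j). -/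
/-- in the round-robin allocation, if agent i picked ℓ chores (nondecreasing
in C_i-cost), agent j picked ℓ−1 chores, C_i(c^t_i) ≤ C_i(c^t_j) for t ≤ ℓ−1, and C_i is
additive α-ratio-bounded, then for every c ∈ X_i,
C_i(X_i \ {c}) ≤ (1 + (α−1)/(ℓ−1))·C_i(X_j). -/
theorem roundRobin_pick_bound (m l : ℕ) (hl : 3 ≤ l)
    (cost : Fin m → ℝ) (hnn : ∀ c, 0 ≤ cost c)
    (α : ℝ) (hα : 1 ≤ α)
    (hratio : ∀ c c' : Fin m, cost c ≤ α * cost c')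
    (ci : Fin l → Fin m) (hci : Function.Injective ci)
    (cj : Fin (l - 1) → Fin m) (hcj : Function.Injective cj)
    (hord : ∀ s t : Fin l, s ≤ t → cost (ci s) ≤ cost (ci t))
    (hcmp : ∀ t : Fin (l - 1),
      cost (ci ⟨(t : ℕ), lt_of_lt_of_le t.isLt (Nat.sub_le l 1)⟩) ≤ cost (cj t)) :
    ∀ c ∈ Finset.image ci Finset.univ,
      ∑ x ∈ Finset.image ci Finset.univ \ {c}, cost x ≤
        (1 + (α - 1) / ((l : ℝ) - 1)) * ∑ x ∈ Finset.image cj Finset.univ, cost x := by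
  obtain ⟨n, rfl⟩ : ∃ n, l = n + 1 := ⟨l - 1, (Nat.succ_pred_eq_of_pos (by omega)).symm⟩
  intro c hc
  obtain ⟨t0, -, rfl⟩ := Finset.mem_image.mp hc
  have hn : 2 ≤ n := by omega
  have hn0 : (0:ℝ) < (n : ℝ) := by exact_mod_cast Nat.pos_of_ne_zero (by omega)
  have hSj : ∑ x ∈ Finset.image cj Finset.univ, cost x = ∑ t : Fin n, cost (cj t) :=
    Finset.sum_image (fun x _ y _ h => hcj h)
  set Sj : ℝ := ∑ t : Fin n, cost (cj t) with hSjdef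
  have hA : ∑ x ∈ Finset.image ci Finset.univ \ {ci t0}, cost x
      = (∑ t : Fin (n+1), cost (ci t)) - cost (ci t0) := by
    rw [Finset.sum_sdiff_eq_sub (Finset.singleton_subset_iff.mpr hc), Finset.sum_singleton,
        Finset.sum_image (fun x _ y _ h => hci h)]
  -- termwise comparison for the first n picks of i
  have hmid : ∑ t : Fin n, cost (ci t.castSucc) ≤ Sj := by
    apply Finset.sum_le_sum
    intro t _
    exact hcmp t
  have hT : ∑ t : Fin (n+1), cost (ci t)
      = (∑ t : Fin n, cost (ci t.castSucc)) + cost (ci (Fin.last n)) :=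
    Fin.sum_univ_castSucc _
  -- n * cost (ci 0) ≤ Sj
  have hmin : (n : ℝ) * cost (ci 0) ≤ Sj := by
    have : ∑ _t : Fin n, cost (ci 0) ≤ Sj := by
      apply Finset.sum_le_sum
      intro t _
      calc cost (ci 0) ≤ cost (ci t.castSucc) := hord 0 t.castSucc (Fin.zero_le _)
        _ ≤ cost (cj t) := hcmp t
    simpa using this
  have hlast : cost (ci (Fin.last n)) ≤ α * cost (ci 0) := hratio _ _
  have h0 : cost (ci 0) ≤ cost (ci t0) := hord 0 t0 (Fin.zero_le _)
  have hcast : ((n : ℕ) + 1 : ℝ) - 1 = (n : ℝ) := by ring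
  rw [hA, hSj, hT]
  push_cast [hcast]
  have hstep : (α - 1) * cost (ci 0) ≤ (α - 1) / (n : ℝ) * Sj := by
    rw [div_mul_eq_mul_div, le_div_iff₀ hn0]
    nlinarith [hmin, sub_nonneg.mpr hα, hnn (ci 0)]
  have hSjnn : 0 ≤ Sj := Finset.sum_nonneg fun t _ => hnn _
  nlinarith [hmid, hlast, h0, hstep]
end
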